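/- arXiv:2601.13266 — 5 statements merged into one kernel-verified Lean document; each statement's English description precedes it below -/
import Mathlib

section
/- Let x be a real number with x > 1 and t a natural number with t ≥ 2. Then (1 - x^(2/t - 1)) / (x^(1/t) - 1) ≤ t - 1. -/
/-!
Put `y = x ^ (1 / t) > 1`, so that `x ^ (2 / t - 1) = y ^ (-(t - 2))`. The convex function
`p ↦ y ^ (-p)` lies above its tangent line at `p = 0`, and `log y ≤ y - 1`, whence
`1 - y ^ (-(t - 2)) ≤ (t - 2) (y - 1) ≤ (t - 1) (y - 1)`.
-/

open Real

theorem Real.one_sub_rpow_neg_le_mul_sub_one {y p : ℝ} (hy : 0 < y) (hp : 0 ≤ p) :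
    1 - y ^ (-p) ≤ p * (y - 1) := by
  have hexp : 1 - p * log y ≤ y ^ (-p) := by
    rw [rpow_def_of_pos hy]
    linarith [add_one_le_exp (log y * -p)]
  nlinarith [log_le_sub_one_of_pos hy]

theorem stmt_0 (x : ℝ) (t : ℕ) (hx : 1 < x) (ht : 2 ≤ t) :
    (1 - x ^ (2 / (t : ℝ) - 1)) / (x ^ (1 / (t : ℝ)) - 1) ≤ (t : ℝ) - 1 := by
  have ht' : (2 : ℝ) ≤ t := by exact_mod_cast ht
  have hy : 1 < x ^ (1 / (t : ℝ)) := one_lt_rpow hx (by positivity)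
  have hexp : x ^ (2 / (t : ℝ) - 1) = (x ^ (1 / (t : ℝ))) ^ (-((t : ℝ) - 2)) := by
    rw [← rpow_mul (by linarith)]
    congr 1
    field_simp
    ring
  rw [hexp, div_le_iff₀ (by linarith)]
  calc 1 - (x ^ (1 / (t : ℝ))) ^ (-((t : ℝ) - 2))
      ≤ ((t : ℝ) - 2) * (x ^ (1 / (t : ℝ)) - 1) :=
        one_sub_rpow_neg_le_mul_sub_one (by linarith) (by linarith)
    _ ≤ ((t : ℝ) - 1) * (x ^ (1 / (t : ℝ)) - 1) := by gcongr; linarith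
end

section
/- Let V be a finite set of n elements with a strict total order, and let Q be a multiset of q elements sampled independently and uniformly at random from V. Let R be the rank (position in the total order, starting from 1) of the minimum element of Q. Then E[R] < n/(q+1) + 1. -/
open Finset

lemma auxA (q k : ℕ) (hq : 1 ≤ q) : k^(q+1) + (q+1)*k^q + 1 ≤ (k+1)^(q+1) := by
  induction q with
  | zero => omega
  | succ q ih =>
    rcases Nat.eq_or_lt_of_le hq with h | h
    · have : q = 0 := by omega
      subst this
      have e : (k+1)^(0+1+1) = k^(0+1+1) + (0+1+1)*k^(0+1) + 1 := by ring
      omega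
    · have hq1 : 1 ≤ q := by omega
      have hihq := ih hq1
      show k^(q+2) + (q+2)*k^(q+1) + 1 ≤ (k+1)^(q+2)
      calc k^(q+2) + (q+2)*k^(q+1) + 1
          ≤ k^(q+2)+(q+2)*k^(q+1)+(q+1)*k^q+k+1 := by
            linarith [Nat.zero_le ((q+1)*k^q), Nat.zero_le k]
        _ = (k+1)*(k^(q+1)+(q+1)*k^q+1) := by ring
        _ ≤ (k+1)*(k+1)^(q+1) := Nat.mul_le_mul_left _ hihq
        _ = (k+1)^(q+2) := by ring

lemma auxL (q : ℕ) (hq : 1 ≤ q) : ∀ n, (q+1) * (∑ k ∈ range n, k^q) + n ≤ n^(q+1) + 1 := by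
  intro n
  induction n with
  | zero => simp
  | succ n ih =>
    rw [Finset.sum_range_succ, Nat.mul_add]
    have := auxA q n hq
    nlinarith

lemma auxKey (q n : ℕ) (hq : 1 ≤ q) (hn : 1 ≤ n) :
    (q+1) * (∑ k ∈ range (n+1), k^q) < n^(q+1) + (q+1)*n^q := by
  rw [Finset.sum_range_succ, Nat.mul_add]
  have h0 : (q+1) * (∑ k ∈ range n, k^q) < n^(q+1) := by
    rcases Nat.eq_or_lt_of_le hn with h | h
    · subst h
      simp [Nat.zero_pow (by omega : 0 < q)]
    · have := auxL q hq n
      set C := (q+1) * (∑ k ∈ range n, k^q)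
      omega
  omega

lemma auxCount {V : Type*} [Fintype V] [LinearOrder V] [DecidableEq V] (q : ℕ) (u : V) :
    (univ.filter (fun f : Fin q → V => ∀ i, u ≤ f i)).card
      = ((univ.filter (fun v => u ≤ v)).card)^q := by
  have : (univ.filter (fun f : Fin q → V => ∀ i, u ≤ f i))
      = Fintype.piFinset (fun _ : Fin q => univ.filter (fun v => u ≤ v)) := by
    ext f; simp [Fintype.mem_piFinset]
  rw [this, Fintype.card_piFinset]
  simp

lemma auxImage {V : Type*} [Fintype V] [LinearOrder V] [DecidableEq V] (n : ℕ)
    (hn : Fintype.card V = n) :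
    Finset.image (fun u : V => (univ.filter (fun v => u ≤ v)).card) univ = Finset.Icc 1 n := by
  set c := fun u : V => (univ.filter (fun v => u ≤ v)).card with hc
  have hanti : StrictAnti c := by
    intro u v huv
    apply Finset.card_lt_card
    constructor
    · intro w hw
      simp only [mem_filter, mem_univ, true_and] at hw ⊢
      exact le_trans (le_of_lt huv) hw
    · intro hsub
      have := hsub (by simp : u ∈ univ.filter (fun w => u ≤ w))
      simp at this
      exact absurd this (not_le.mpr huv)
  have hinj : Function.Injective c := hanti.injective
  apply Finset.eq_of_subset_of_card_le
  · intro k hk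
    simp only [Finset.mem_image, mem_univ, true_and] at hk
    obtain ⟨u, rfl⟩ := hk
    simp only [Finset.mem_Icc]
    constructor
    · exact Finset.card_pos.mpr ⟨u, by simp⟩
    · rw [← hn]
      exact (Finset.card_filter_le _ _).trans (le_of_eq Finset.card_univ)
  · rw [Nat.card_Icc, Finset.card_image_of_injective _ hinj]
    simp [hn]

lemma auxInj {V : Type*} [Fintype V] [LinearOrder V] [DecidableEq V] :
    Function.Injective (fun u : V => (univ.filter (fun v => u ≤ v)).card) := by
  have hanti : StrictAnti (fun u : V => (univ.filter (fun v => u ≤ v)).card) := by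
    intro u v huv
    apply Finset.card_lt_card
    constructor
    · intro w hw
      simp only [mem_filter, mem_univ, true_and] at hw ⊢
      exact le_trans (le_of_lt huv) hw
    · intro hsub
      have := hsub (by simp : u ∈ univ.filter (fun w => u ≤ w))
      simp at this
      exact absurd this (not_le.mpr huv)
  exact hanti.injective

/-- Expected rank of the minimum of `q` uniform samples with replacement from a
linearly ordered set of size `n` is less than `n/(q+1) + 1`. The rank of `v` is
the number of elements `≤ v` (position in the order, starting at 1). -/
theorem stmt_4 {V : Type*} [Fintype V] [LinearOrder V] [DecidableEq V]
    (n q : ℕ) (hn : Fintype.card V = n) (hq : 1 ≤ q) :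
    (∑ f : Fin q → V,
        ((Finset.univ.filter
            (fun u : V => u ≤ Finset.univ.inf' (Finset.univ_nonempty_iff.mpr ⟨⟨0, hq⟩⟩) f)).card : ℝ))
      / (n : ℝ) ^ q < (n : ℝ) / ((q : ℝ) + 1) + 1 := by
  rcases Nat.eq_zero_or_pos n with hn0 | hnpos
  · subst hn0
    haveI : IsEmpty V := Fintype.card_eq_zero_iff.mp hn
    haveI : IsEmpty (Fin q → V) := Function.isEmpty (f := fun f : Fin q → V => f ⟨0, hq⟩)
    rw [Finset.univ_eq_empty, Finset.sum_empty]
    simp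
  · -- numerator as a natural number
    set H := Finset.univ_nonempty_iff.mpr (⟨⟨0, hq⟩⟩ : Nonempty (Fin q))
    have hNeq : (∑ f : Fin q → V,
        (Finset.univ.filter (fun u : V => u ≤ Finset.univ.inf' H f)).card)
        = ∑ k ∈ range (n+1), k^q := by
      calc (∑ f : Fin q → V,
              (univ.filter (fun u : V => u ≤ univ.inf' H f)).card)
          = ∑ f : Fin q → V, ∑ u : V, if u ≤ univ.inf' H f then 1 else 0 :=
            Finset.sum_congr rfl fun f _ => Finset.card_filter _ _
        _ = ∑ u : V, ∑ f : Fin q → V, if u ≤ univ.inf' H f then 1 else 0 :=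
            Finset.sum_comm
        _ = ∑ u : V, (univ.filter (fun f : Fin q → V => ∀ i, u ≤ f i)).card := by
            refine Finset.sum_congr rfl fun u _ => ?_
            rw [Finset.card_filter]
            refine Finset.sum_congr rfl fun f _ => ?_
            congr 1
            simp [Finset.le_inf'_iff]
        _ = ∑ u : V, ((univ.filter (fun v => u ≤ v)).card)^q := by
            refine Finset.sum_congr rfl fun u _ => auxCount q u
        _ = ∑ k ∈ Finset.image (fun u : V => (univ.filter (fun v => u ≤ v)).card) univ, k^q := by
            rw [Finset.sum_image (fun x _ y _ h => auxInj h)]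
        _ = ∑ k ∈ Finset.Icc 1 n, k^q := by rw [auxImage n hn]
        _ = ∑ k ∈ range (n+1), k^q := by
            have hins : range (n+1) = insert 0 (Finset.Icc 1 n) := by
              ext k; simp [Nat.lt_succ_iff]; omega
            rw [hins, Finset.sum_insert (by simp), Nat.zero_pow (by omega : 0 < q), Nat.zero_add]
    have key := auxKey q n hq hnpos
    have keyR : ((q:ℝ)+1) * (∑ k ∈ range (n+1), (k:ℝ)^q)
        < (n:ℝ)^(q+1) + ((q:ℝ)+1)*(n:ℝ)^q := by exact_mod_cast key
    have hsum : (∑ f : Fin q → V,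
        ((univ.filter (fun u : V => u ≤ univ.inf' H f)).card : ℝ))
        = ∑ k ∈ range (n+1), (k:ℝ)^q := by
      rw [← Nat.cast_sum]
      exact_mod_cast congrArg (Nat.cast : ℕ → ℝ) hNeq
    rw [hsum]
    have hpow : (0:ℝ) < (n:ℝ)^q := by positivity
    have hq1 : (0:ℝ) < (q:ℝ)+1 := by positivity
    rw [div_lt_iff₀ hpow,
      show ((n:ℝ)/((q:ℝ)+1)+1)*(n:ℝ)^q = ((n:ℝ)^(q+1) + ((q:ℝ)+1)*(n:ℝ)^q)/((q:ℝ)+1) from by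
        field_simp; ring,
      lt_div_iff₀ hq1]
    linarith [keyR, mul_comm ((q:ℝ)+1) (∑ k ∈ range (n+1), (k:ℝ)^q)]
end

section
/- Let T be a rooted tree with root r, and for each vertex v define f_v : V → ℤ by f_v(x) = -dist_T(r,x) if x is an ancestor of v (in T), and f_v(x) = dist_T(r,x) otherwise. Then v is the unique local minimum of f_v with respect to the tree T, i.e., f_v(v) ≤ f_v(u) for all neighbors u of v in T, and no other vertex has this property. -/
/- In a finite rooted tree encoded by a parent function `parent` with root `r`
(where `depth` is the distance from the root in the tree, and the tree edges are the
pairs `{u, parent u}` for `u ≠ r`), the vertex `v` is the unique local minimum of the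
function `f_v(x) = -depth x` if `x` is an ancestor of `v`, and `depth x` otherwise. -/
open Classical in
theorem stmt_8 {V : Type*} [Fintype V] (parent : V → V) (r : V)
    (hroot : parent r = r) (hreach : ∀ u : V, ∃ k : ℕ, parent^[k] u = r)
    (depth : V → ℕ) (hdepth0 : depth r = 0)
    (hdepth : ∀ u : V, u ≠ r → depth u = depth (parent u) + 1)
    (v : V)
    (f : V → ℤ)
    (hf : ∀ x : V, f x = if ∃ k : ℕ, parent^[k] v = x then -(depth x : ℤ) else (depth x : ℤ))
    (adj : V → V → Prop)
    (hadj : ∀ u w : V, adj u w ↔ u ≠ w ∧ (parent u = w ∨ parent w = u)) :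
    (∀ u : V, adj v u → f v ≤ f u) ∧
      ∀ w : V, (∀ u : V, adj w u → f w ≤ f u) → w = v := by
  classical
  have hfix : ∀ x : V, parent x = x → x = r := by
    intro x hx
    by_contra h
    have := hdepth x h
    rw [hx] at this
    omega
  have hmono : ∀ y : V, depth (parent y) ≤ depth y := by
    intro y
    by_cases hy : y = r
    · rw [hy, hroot]
    · rw [hdepth y hy]; omega
  have hiter : ∀ (k : ℕ) (x : V), depth (parent^[k] x) ≤ depth x := by
    intro k
    induction k with
    | zero => intro x; simp
    | succ n ih =>
        intro x
        rw [Function.iterate_succ_apply']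
        exact le_trans (hmono _) (ih x)
  have hvanc : ∃ k : ℕ, parent^[k] v = v := ⟨0, rfl⟩
  constructor
  · intro u hu
    rw [hadj] at hu
    obtain ⟨hne, hcase⟩ := hu
    rw [hf v, hf u, if_pos hvanc]
    rcases hcase with h1 | h2
    · -- parent v = u : u is ancestor of v
      have hvr : v ≠ r := by
        intro hv
        rw [hv, hroot] at h1
        exact hne (hv.trans h1)
      have hu_anc : ∃ k : ℕ, parent^[k] v = u := ⟨1, h1⟩
      rw [if_pos hu_anc]
      have := hdepth v hvr
      rw [h1] at this
      omega
    · -- parent u = v : u is a child of v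
      have hur : u ≠ r := by
        intro hu'
        rw [hu', hroot] at h2
        exact hne (hu'.trans h2).symm
      have hdu : depth u = depth v + 1 := by rw [hdepth u hur, h2]
      have hnotanc : ¬ ∃ k : ℕ, parent^[k] v = u := by
        rintro ⟨k, hk⟩
        have := hiter k v
        rw [hk] at this
        omega
      rw [if_neg hnotanc]
      omega
  · intro w hw
    by_contra hwv
    by_cases hanc : ∃ k : ℕ, parent^[k] v = w
    · -- w is a strict ancestor of v
      have hm := Nat.find_spec hanc
      set m := Nat.find hanc with hmdef
      have hmpos : m ≠ 0 := by
        intro h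
        rw [h] at hm
        exact hwv hm.symm
      obtain ⟨n, hn⟩ := Nat.exists_eq_succ_of_ne_zero hmpos
      set x := parent^[n] v with hx
      have hpx : parent x = w := by
        have h' : parent^[n + 1] v = w := by rw [hn] at hm; exact hm
        rw [Function.iterate_succ_apply'] at h'
        rw [hx]; exact h'
      have hxw : x ≠ w := by
        intro h
        have hnw : parent^[n] v = w := by rw [← hx, h]
        exact Nat.find_min hanc (by omega) hnw
      have hxr : x ≠ r := by
        intro h
        rw [h, hroot] at hpx
        exact hxw (h.trans hpx)
      have hadjwx : adj w x := (hadj w x).2 ⟨hxw.symm, Or.inr hpx⟩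
      have hle := hw x hadjwx
      rw [hf w, hf x, if_pos ⟨m, hm⟩, if_pos ⟨n, rfl⟩] at hle
      have hdx : depth x = depth w + 1 := by rw [hdepth x hxr, hpx]
      omega
    · -- w is not an ancestor of v; consider its parent
      have hwr : w ≠ r := by
        intro h
        obtain ⟨k, hk⟩ := hreach v
        exact hanc ⟨k, by rw [hk, h]⟩
      have hpw : parent w ≠ w := by
        intro h
        exact hwr (hfix w h)
      have hadjwp : adj w (parent w) := (hadj w (parent w)).2 ⟨Ne.symm hpw, Or.inl rfl⟩
      have hle := hw (parent w) hadjwp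
      rw [hf w, hf (parent w), if_neg hanc] at hle
      have hdw : depth w = depth (parent w) + 1 := hdepth w hwr
      by_cases hpa : ∃ k : ℕ, parent^[k] v = parent w
      · rw [if_pos hpa] at hle; omega
      · rw [if_neg hpa] at hle; omega
end

section
/- Let T be a rooted tree with root r, G a graph on the same vertex set containing all edges of T, and f_v defined as f_v(x) = -dist_T(r,x) if x ⪯_T v, and dist_T(r,x) otherwise. Then v is the unique local minimum of f_v on G. -/
/- Let `T` be a rooted spanning tree (encoded by a parent function with root `r` and
depth function giving distance from the root in `T`) of a graph `G` containing all tree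
edges. Then `v` is the unique local minimum on `G` of the function
`f_v(x) = -depth x` if `x ⪯_T v`, and `depth x` otherwise. -/
open Classical in
theorem stmt_9 {V : Type*} [Fintype V] (G : SimpleGraph V) (parent : V → V) (r : V)
    (hroot : parent r = r) (hreach : ∀ u : V, ∃ k : ℕ, parent^[k] u = r)
    (hspan : ∀ u : V, u ≠ r → G.Adj u (parent u))
    (depth : V → ℕ) (hdepth0 : depth r = 0)
    (hdepth : ∀ u : V, u ≠ r → depth u = depth (parent u) + 1)
    (v : V)
    (f : V → ℤ)
    (hf : ∀ x : V, f x = if ∃ k : ℕ, parent^[k] v = x then -(depth x : ℤ) else (depth x : ℤ)) :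
    (∀ u : V, G.Adj v u → f v ≤ f u) ∧
      ∀ w : V, (∀ u : V, G.Adj w u → f w ≤ f u) → w = v := by
  have hdm : ∀ u, depth (parent u) ≤ depth u := by
    intro u
    by_cases hu : u = r
    · rw [hu, hroot]
    · rw [hdepth u hu]; omega
  have hiter : ∀ k u, depth (parent^[k] u) ≤ depth u := by
    intro k
    induction k with
    | zero => intro u; simp
    | succ n ih =>
        intro u
        rw [Function.iterate_succ_apply]
        exact (ih _).trans (hdm u)
  constructor
  · intro u hadj
    have hv : f v = -(depth v : ℤ) := by
      rw [hf]; exact if_pos ⟨0, rfl⟩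
    rw [hv, hf u]
    split_ifs with h
    · obtain ⟨k, hk⟩ := h
      have := hiter k v
      rw [hk] at this
      omega
    · omega
  · intro w hw
    by_contra hne
    by_cases hanc : ∃ k : ℕ, parent^[k] v = w
    · have hk0 := Nat.find_spec hanc
      set k := Nat.find hanc with hkdef
      have hkpos : k ≠ 0 := by
        intro h
        rw [h] at hk0
        simp at hk0
        exact hne hk0.symm
      set u := parent^[k-1] v with hu
      have hpu : parent u = w := by
        have h1 : parent (parent^[k-1] v) = parent^[k-1+1] v :=
          (Function.iterate_succ_apply' parent (k-1) v).symm
        have hks : k - 1 + 1 = k := Nat.succ_pred_eq_of_pos (Nat.pos_of_ne_zero hkpos)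
        rw [hu, h1, hks]; exact hk0
      have hunw : u ≠ w := by
        intro h
        exact Nat.find_min hanc (m := k-1) (by omega) (h ▸ hu.symm)
      have hur : u ≠ r := by
        intro h
        apply hunw
        rw [h] at hpu
        rw [h, ← hpu, hroot]
      have hadj : G.Adj w u := (hpu ▸ hspan u hur).symm
      have hle := hw u hadj
      have hfw : f w = -(depth w : ℤ) := by rw [hf, if_pos hanc]
      have hfu : f u = -(depth u : ℤ) := by rw [hf, if_pos ⟨k-1, hu.symm⟩]
      have hd : depth u = depth w + 1 := by rw [hdepth u hur, hpu]
      rw [hfw, hfu] at hle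
      omega
    · have hwr : w ≠ r := by
        intro h
        apply hanc
        obtain ⟨k, hk⟩ := hreach v
        exact ⟨k, h ▸ hk⟩
      have hadj : G.Adj w (parent w) := hspan w hwr
      have hle := hw _ hadj
      have hfw : f w = (depth w : ℤ) := by rw [hf, if_neg hanc]
      rw [hfw, hf (parent w)] at hle
      have hdw : depth w = depth (parent w) + 1 := hdepth w hwr
      split_ifs at hle <;> omega
end

section
/- Let G = (V,E) be a graph and C ⊆ V a vertex cover of G. Let f : V → ℝ be injective, let z = argmin_{v ∈ C} f(v), and suppose z is not a local minimum of f. Let w be the neighbor of z with smallest value of f. Then w is a local minimum of f on G. -/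
theorem stmt_10 {V : Type*} [Fintype V] (G : SimpleGraph V)
    (C : Finset V) (hC : ∀ u w : V, G.Adj u w → u ∈ C ∨ w ∈ C)
    (f : V → ℝ) (hf : Function.Injective f)
    (z : V) (hzC : z ∈ C) (hzmin : ∀ u ∈ C, f z ≤ f u)
    (hznotloc : ¬ (∀ u : V, G.Adj z u → f z ≤ f u))
    (w : V) (hw : G.Adj z w) (hwmin : ∀ u : V, G.Adj z u → f w ≤ f u) :
    ∀ u : V, G.Adj w u → f w ≤ f u := by
  push_neg at hznotloc
  obtain ⟨v, hv, hvlt⟩ := hznotloc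
  have hwz : f w < f z := lt_of_le_of_lt (hwmin v hv) hvlt
  have hwC : w ∉ C := fun h => absurd (hzmin w h) (not_le.mpr hwz)
  intro u hu
  rcases hC w u hu with h | h
  · exact absurd h hwC
  · exact le_of_lt (lt_of_lt_of_le hwz (hzmin u h))
end
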